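/- arXiv:2107.03687 — 5 statements merged into one kernel-verified Lean document; each statement's English description precedes it below -/
import Mathlib

section
/- Dominated Convergence for non-measurable functions: if (h_n)_{n∈ℕ} is a sequence of arbitrary functions Σ → [0,∞] converging pointwise ρ-almost everywhere to 0, and the upper integral of sup_n h_n is finite, then the lower integral of h_n converges to 0 as n → ∞. -/
/-!
Pick measurable minorants `f n ≤ h n` whose integrals come within `2⁻¹ ^ n` of the lower
integrals. They tend to `0` a.e. and are dominated by a majorant with finite integral of
`⨆ n, h n`, so Lebesgue's dominated convergence theorem sends their integrals to `0`.
-/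

open MeasureTheory ENNReal Filter
open scoped ENNReal NNReal Topology

noncomputable section

/-- The upper integral of an arbitrary (not necessarily measurable) function. -/
def upperIntegral {Ω : Type*} [MeasurableSpace Ω] (ρ : Measure Ω) (h : Ω → ℝ≥0∞) : ℝ≥0∞ :=
  ⨅ (g : Ω → ℝ≥0∞) (_ : Measurable g) (_ : ∀ᵐ ω ∂ρ, h ω ≤ g ω), ∫⁻ ω, g ω ∂ρ

/-- The lower integral of an arbitrary function. -/
def lowerIntegral {Ω : Type*} [MeasurableSpace Ω] (ρ : Measure Ω) (h : Ω → ℝ≥0∞) : ℝ≥0∞ :=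
  ⨆ (g : Ω → ℝ≥0∞) (_ : Measurable g) (_ : ∀ᵐ ω ∂ρ, g ω ≤ h ω), ∫⁻ ω, g ω ∂ρ

section

variable {Ω : Type*} [MeasurableSpace Ω] {ρ : Measure Ω} {h : Ω → ℝ≥0∞}

theorem exists_measurable_ae_ge_lintegral_lt_of_upperIntegral_lt {c : ℝ≥0∞}
    (hc : upperIntegral ρ h < c) :
    ∃ g, Measurable g ∧ (∀ᵐ ω ∂ρ, h ω ≤ g ω) ∧ ∫⁻ ω, g ω ∂ρ < c := by
  simpa only [upperIntegral, iInf_lt_iff, exists_prop] using hc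

theorem lowerIntegral_le_lintegral_of_ae_le {g : Ω → ℝ≥0∞} (hhg : ∀ᵐ ω ∂ρ, h ω ≤ g ω) :
    lowerIntegral ρ h ≤ ∫⁻ ω, g ω ∂ρ :=
  iSup₂_le fun _ _ => iSup_le fun hfh =>
    lintegral_mono_ae (by filter_upwards [hfh, hhg] with ω h₁ h₂ using h₁.trans h₂)

theorem exists_measurable_ae_le_lowerIntegral_le_lintegral_add (hfin : lowerIntegral ρ h ≠ ∞)
    {ε : ℝ≥0∞} (hε : ε ≠ 0) :
    ∃ f, Measurable f ∧ (∀ᵐ ω ∂ρ, f ω ≤ h ω) ∧ lowerIntegral ρ h ≤ ∫⁻ ω, f ω ∂ρ + ε := by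
  rcases eq_or_ne (lowerIntegral ρ h) 0 with hzero | hpos
  · exact ⟨0, measurable_const, .of_forall fun _ => zero_le, by simp [hzero]⟩
  obtain ⟨f, hf, hfh, hlt⟩ : ∃ f, Measurable f ∧ (∀ᵐ ω ∂ρ, f ω ≤ h ω) ∧
      lowerIntegral ρ h - ε < ∫⁻ ω, f ω ∂ρ := by
    simpa only [lowerIntegral, lt_iSup_iff, exists_prop] using ENNReal.sub_lt_self hfin hpos hε
  exact ⟨f, hf, hfh, tsub_le_iff_right.mp hlt.le⟩

end

/-- dominated convergence for (possibly non-measurable) nonnegative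
functions: if `h_n → 0` pointwise ρ-a.e. and the upper integral of `sup_n h_n` is
finite, then the lower integrals of `h_n` tend to `0`. -/
theorem lowerIntegral_tendsto_zero_of_dominated
    {S : Type*} [MeasurableSpace S] (ρ : Measure S)
    (h : ℕ → S → ℝ≥0∞)
    (hconv : ∀ᵐ σ ∂ρ, Tendsto (fun n => h n σ) atTop (𝓝 0))
    (hdom : upperIntegral ρ (fun σ => ⨆ n, h n σ) < ∞) :
    Tendsto (fun n => lowerIntegral ρ (h n)) atTop (𝓝 0) := by
  obtain ⟨g, -, hhg, hg⟩ := exists_measurable_ae_ge_lintegral_lt_of_upperIntegral_lt hdom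
  have hhng (n : ℕ) : ∀ᵐ σ ∂ρ, h n σ ≤ g σ := by
    filter_upwards [hhg] with σ hσ using (le_iSup (h · σ) n).trans hσ
  have hfin (n : ℕ) : lowerIntegral ρ (h n) ≠ ∞ :=
    ((lowerIntegral_le_lintegral_of_ae_le (hhng n)).trans_lt hg).ne
  choose f hf hfh hLf using fun n =>
    exists_measurable_ae_le_lowerIntegral_le_lintegral_add (hfin n)
      (pow_ne_zero n (by simp : (2 : ℝ≥0∞)⁻¹ ≠ 0))
  have hfg (n : ℕ) : ∀ᵐ σ ∂ρ, f n σ ≤ g σ := by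
    filter_upwards [hfh n, hhng n] with σ h₁ h₂ using h₁.trans h₂
  have hf_lim : ∀ᵐ σ ∂ρ, Tendsto (fun n => f n σ) atTop (𝓝 0) := by
    filter_upwards [hconv, ae_all_iff.mpr hfh] with σ hσ hfhσ
    exact tendsto_of_tendsto_of_tendsto_of_le_of_le tendsto_const_nhds hσ
      (fun n => zero_le) hfhσ
  have hint_lim : Tendsto (fun n => ∫⁻ σ, f n σ ∂ρ) atTop (𝓝 0) := by
    simpa using tendsto_lintegral_of_dominated_convergence g hf hfg hg.ne hf_lim
  have hpow_lim : Tendsto (fun n : ℕ => (2 : ℝ≥0∞)⁻¹ ^ n) atTop (𝓝 0) :=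
    ENNReal.tendsto_pow_atTop_nhds_zero_of_lt_one (ENNReal.inv_lt_one.mpr one_lt_two)
  exact tendsto_of_tendsto_of_tendsto_of_le_of_le tendsto_const_nhds
    (by simpa using hint_lim.add hpow_lim) (fun n => zero_le) hLf

end
end

section
/- If (Σ_n, ℋ_n, ρ_n)_{n∈ℕ} is a sequence of measure spaces and (Σ, ℋ, ρ) is their disjoint union, then for an arbitrary function h : Σ → [0,∞], the lower integral of h over Σ equals the sum over n of the lower integrals of h restricted to Σ_n, and similarly for the upper integral. -/
open MeasureTheory ENNReal
open scoped ENNReal NNReal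

noncomputable section

/-! The lower integral is the Lebesgue integral `∫⁻` itself (a supremum over measurable
minorants, defined for every function), which is countably additive in the measure. The upper
integral is attained by a measurable majorant, the infimum of a minimizing sequence of
majorants; and measurable majorants on the disjoint union are exactly families of measurable
majorants on the pieces. -/

section Sigma

variable {ι : Type*} {X : ι → Type*} [∀ i, MeasurableSpace (X i)]

theorem measurableSet_sigma_iff {t : Set (Σ i, X i)} :
    MeasurableSet t ↔ ∀ i, MeasurableSet (Sigma.mk i ⁻¹' t) :=
  MeasurableSpace.measurableSet_iInf

theorem measurable_sigmaMk (i : ι) : Measurable (Sigma.mk i : X i → Σ i, X i) :=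
  fun _ ht => measurableSet_sigma_iff.1 ht i

theorem measurable_sigma_iff {β : Type*} [MeasurableSpace β] {f : (Σ i, X i) → β} :
    Measurable f ↔ ∀ i, Measurable fun x => f ⟨i, x⟩ :=
  ⟨fun hf i => hf.comp (measurable_sigmaMk i),
    fun hf _ hs => measurableSet_sigma_iff.2 fun i => hf i hs⟩

theorem measurableEmbedding_sigmaMk (i : ι) :
    MeasurableEmbedding (Sigma.mk i : X i → Σ i, X i) where
  injective := sigma_mk_injective
  measurable := measurable_sigmaMk i
  measurableSet_image' s hs := measurableSet_sigma_iff.2 fun j => by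
    rcases eq_or_ne i j with rfl | hne
    · rwa [Set.preimage_image_eq _ sigma_mk_injective]
    · rw [Set.preimage_image_sigmaMk_of_ne hne.symm]
      exact .empty

variable (ρ : ∀ i, Measure (X i))

theorem lintegral_sum_map_sigmaMk (f : (Σ i, X i) → ℝ≥0∞) :
    ∫⁻ ω, f ω ∂Measure.sum (fun i => (ρ i).map (Sigma.mk i)) = ∑' i, ∫⁻ x, f ⟨i, x⟩ ∂ρ i := by
  rw [lintegral_sum_measure]
  exact tsum_congr fun i => (measurableEmbedding_sigmaMk i).lintegral_map f

theorem ae_sum_map_sigmaMk_iff [Countable ι] {p : (Σ i, X i) → Prop} :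
    (∀ᵐ ω ∂Measure.sum (fun i => (ρ i).map (Sigma.mk i)), p ω) ↔ ∀ i, ∀ᵐ x ∂ρ i, p ⟨i, x⟩ := by
  rw [Measure.ae_sum_iff]
  exact forall_congr' fun i => (measurableEmbedding_sigmaMk i).ae_map_iff

end Sigma

section LowerUpper

variable {Ω : Type*} [MeasurableSpace Ω] (ρ : Measure Ω) (h : Ω → ℝ≥0∞)

theorem lowerIntegral_eq_lintegral : lowerIntegral ρ h = ∫⁻ ω, h ω ∂ρ := by
  refine le_antisymm (iSup₂_le fun _ _ => iSup_le lintegral_mono_ae) ?_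
  obtain ⟨g, hg, hgh, hint⟩ := exists_measurable_le_lintegral_eq ρ h
  rw [hint]
  exact le_iSup₂_of_le g hg <| le_iSup_of_le (.of_forall hgh) le_rfl

variable {ρ h}

theorem upperIntegral_le_lintegral {g : Ω → ℝ≥0∞} (hg : Measurable g)
    (hhg : ∀ᵐ ω ∂ρ, h ω ≤ g ω) : upperIntegral ρ h ≤ ∫⁻ ω, g ω ∂ρ :=
  iInf₂_le_of_le g hg <| iInf_le _ hhg

variable (ρ h)

theorem upperIntegral_eq_sInf :
    upperIntegral ρ h =
      sInf ((fun g => ∫⁻ ω, g ω ∂ρ) '' {g | Measurable g ∧ ∀ᵐ ω ∂ρ, h ω ≤ g ω}) := by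
  rw [sInf_image]
  simp only [Set.mem_ofPred_eq, iInf_and]
  rfl

theorem exists_measurable_ae_le_lintegral_eq_upperIntegral :
    ∃ g : Ω → ℝ≥0∞, Measurable g ∧ (∀ᵐ ω ∂ρ, h ω ≤ g ω) ∧
      ∫⁻ ω, g ω ∂ρ = upperIntegral ρ h := by
  have htop : (fun _ => ∞ : Ω → ℝ≥0∞) ∈ {g | Measurable g ∧ ∀ᵐ ω ∂ρ, h ω ≤ g ω} :=
    ⟨measurable_const, .of_forall fun _ => le_top⟩
  obtain ⟨u, -, hu_lim, hu_mem⟩ :=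
    exists_seq_tendsto_sInf ⟨_, Set.mem_image_of_mem _ htop⟩ (OrderBot.bddBelow (α := ℝ≥0∞) _)
  choose g hg hgu using hu_mem
  have hmeas : Measurable fun ω => ⨅ k, g k ω := .iInf fun k => (hg k).1
  have hle : ∀ᵐ ω ∂ρ, h ω ≤ ⨅ k, g k ω :=
    (ae_all_iff.2 fun k => (hg k).2).mono fun _ hω => le_iInf hω
  refine ⟨_, hmeas, hle, le_antisymm ?_ (upperIntegral_le_lintegral hmeas hle)⟩
  rw [upperIntegral_eq_sInf]
  refine ge_of_tendsto' hu_lim fun k => ?_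
  rw [← hgu k]
  exact lintegral_mono fun ω => iInf_le _ k

end LowerUpper

/-- upper and lower integrals over a countable disjoint union of
measure spaces decompose as sums. The disjoint union of `(Σ_n, ℋ_n, ρ_n)` is
modelled as the sigma type `(n : ℕ) × Ω n` with the measure `∑_n (ρ_n ∘ (Sigma.mk n)⁻¹)`. -/
theorem lowerIntegral_upperIntegral_sigma
    {Ω : ℕ → Type*} [∀ n, MeasurableSpace (Ω n)] (ρ : ∀ n, Measure (Ω n))
    (h : ((n : ℕ) × Ω n) → ℝ≥0∞) :
    lowerIntegral (Measure.sum (fun n => (ρ n).map (Sigma.mk n))) h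
        = ∑' n, lowerIntegral (ρ n) (fun x => h ⟨n, x⟩) ∧
      upperIntegral (Measure.sum (fun n => (ρ n).map (Sigma.mk n))) h
        = ∑' n, upperIntegral (ρ n) (fun x => h ⟨n, x⟩) := by
  refine ⟨by simp only [lowerIntegral_eq_lintegral, lintegral_sum_map_sigmaMk], le_antisymm ?_ ?_⟩
  · choose g hg hhg hgint using fun n =>
      exists_measurable_ae_le_lintegral_eq_upperIntegral (ρ n) (fun x => h ⟨n, x⟩)
    calc _ ≤ ∫⁻ ω, g ω.1 ω.2 ∂Measure.sum (fun n => (ρ n).map (Sigma.mk n)) :=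
          upperIntegral_le_lintegral (measurable_sigma_iff.2 hg)
            ((ae_sum_map_sigmaMk_iff ρ).2 hhg)
      _ = ∑' n, upperIntegral (ρ n) (fun x => h ⟨n, x⟩) := by
          rw [lintegral_sum_map_sigmaMk]
          exact tsum_congr hgint
  · refine le_iInf₂ fun g hg => le_iInf fun hhg => ?_
    rw [lintegral_sum_map_sigmaMk]
    exact ENNReal.tsum_le_tsum fun n => upperIntegral_le_lintegral
      (measurable_sigma_iff.1 hg n) ((ae_sum_map_sigmaMk_iff ρ).1 hhg n)

end
end

section
/- Triangle inequality for Gel'fand–Pettis integrals: if V is a Hausdorff locally convex topological vector space, f : Σ → V is weakly (Gel'fand–Pettis) integrable with respect to a measure ρ, and α is a continuous seminorm on V, then α(∫_Σ f dρ) ≤ ∫̲_Σ α(f(σ)) ρ(dσ), where the right-hand side is the lower integral (since α∘f need not be measurable). -/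
/-!
Hahn–Banach gives a continuous functional `ℓ` with `ℓ I = α I` and `‖ℓ ·‖ ≤ α`. Then
`α I = ‖∫ ℓ ∘ f‖ ≤ ∫ ‖ℓ ∘ f‖`, and `‖ℓ ∘ f‖` is a measurable minorant of `α ∘ f`, so its
integral is bounded by the lower integral.
-/

open MeasureTheory ENNReal
open scoped ENNReal NNReal

noncomputable section

section

variable {𝕜 E : Type*} [RCLike 𝕜] [AddCommGroup E] [Module 𝕜 E]

theorem Seminorm.exists_dual_apply_eq_and_norm_le (p : Seminorm 𝕜 E) (x : E) :
    ∃ g : Module.Dual 𝕜 E, g x = p x ∧ ∀ y, ‖g y‖ ≤ p y := by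
  have hker : ∀ c : 𝕜, c • x = 0 → c • (p x : 𝕜) = 0 := by
    intro c hc
    have : ‖c‖ * p x = 0 := by rw [← map_smul_eq_mul, hc, map_zero]
    rcases mul_eq_zero.1 this with h | h
    · simp [norm_eq_zero.1 h]
    · simp [h]
  set f := LinearPMap.mkSpanSingleton' (σ := RingHom.id 𝕜) x (p x : 𝕜) hker
  obtain ⟨g, hgf, hgp⟩ := Module.Dual.exists_extension_of_le_seminorm f.domain f.toFun
    (p := p) (by
      rintro ⟨_, hy⟩
      obtain ⟨c, rfl⟩ := Submodule.mem_span_singleton.1 hy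
      rw [LinearPMap.toFun_eq_coe, LinearPMap.mkSpanSingleton'_apply]
      simp [map_smul_eq_mul, abs_of_nonneg (apply_nonneg p x)])
  exact ⟨g, (hgf ⟨x, Submodule.mem_span_singleton_self x⟩).trans
    (LinearPMap.mkSpanSingleton'_apply_self _ _ _ _), hgp⟩

theorem LinearMap.continuous_of_norm_le_seminorm {F : Type*} [SeminormedAddCommGroup F]
    [Module 𝕜 F] [TopologicalSpace E] [IsTopologicalAddGroup E] (g : E →ₗ[𝕜] F)
    {p : Seminorm 𝕜 E} (hp : Continuous p) (hgp : ∀ y, ‖g y‖ ≤ p y) : Continuous g := by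
  refine continuous_of_tendsto_nhds_zero g ?_
  rw [tendsto_zero_iff_norm_tendsto_zero]
  exact squeeze_zero (fun _ => norm_nonneg _) hgp (map_zero p ▸ hp.tendsto 0)

theorem Seminorm.exists_strongDual_apply_eq_and_norm_le [TopologicalSpace E]
    [IsTopologicalAddGroup E] {p : Seminorm 𝕜 E} (hp : Continuous p) (x : E) :
    ∃ ℓ : StrongDual 𝕜 E, ℓ x = p x ∧ ∀ y, ‖ℓ y‖ ≤ p y := by
  obtain ⟨g, hgx, hgp⟩ := p.exists_dual_apply_eq_and_norm_le x
  exact ⟨⟨g, g.continuous_of_norm_le_seminorm hp hgp⟩, hgx, hgp⟩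

end

theorem lintegral_le_lowerIntegral {Ω : Type*} [MeasurableSpace Ω] {ρ : Measure Ω}
    {g h : Ω → ℝ≥0∞} (hg : Measurable g) (hgh : ∀ᵐ ω ∂ρ, g ω ≤ h ω) :
    ∫⁻ ω, g ω ∂ρ ≤ lowerIntegral ρ h :=
  le_iSup₂_of_le g hg (le_iSup_of_le hgh le_rfl)

theorem seminorm_weakIntegral_le_lowerIntegral_general
    {S : Type*} [MeasurableSpace S] (ρ : Measure S)
    {V : Type*} [AddCommGroup V] [Module ℂ V] [TopologicalSpace V]
    [IsTopologicalAddGroup V]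
    (f : S → V)
    (hmeas : ∀ ℓ : V →L[ℂ] ℂ, Measurable fun σ => ℓ (f σ))
    (I : V) (hI : ∀ ℓ : V →L[ℂ] ℂ, ℓ I = ∫ σ, ℓ (f σ) ∂ρ)
    (α : Seminorm ℂ V) (hα : Continuous α) :
    ENNReal.ofReal (α I) ≤ lowerIntegral ρ (fun σ => ENNReal.ofReal (α (f σ))) := by
  obtain ⟨ℓ, hℓI, hℓα⟩ := Seminorm.exists_strongDual_apply_eq_and_norm_le hα I
  calc ENNReal.ofReal (α I) = ‖ℓ I‖ₑ := by
        rw [hℓI, ← ofReal_norm, RCLike.norm_ofReal, abs_of_nonneg (apply_nonneg α I)]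
      _ = ‖∫ σ, ℓ (f σ) ∂ρ‖ₑ := by rw [hI]
      _ ≤ ∫⁻ σ, ‖ℓ (f σ)‖ₑ ∂ρ := enorm_integral_le_lintegral_enorm _
      _ ≤ lowerIntegral ρ (fun σ => ENNReal.ofReal (α (f σ))) :=
        lintegral_le_lowerIntegral (hmeas ℓ).enorm (.of_forall fun σ => by
          rw [← ofReal_norm]
          exact ENNReal.ofReal_le_ofReal (hℓα (f σ)))

/-- triangle inequality for Gel'fand–Pettis integrals in a Hausdorff
locally convex topological vector space `V`: if `f` is weakly integrable, `I` is its
weak integral over `Σ`, and `α` is a continuous seminorm on `V`, then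
`α(I) ≤ ∫̲ α(f(σ)) ρ(dσ)` (a lower integral, since `α ∘ f` need not be measurable). -/
theorem seminorm_weakIntegral_le_lowerIntegral
    {S : Type*} [MeasurableSpace S] (ρ : Measure S)
    {V : Type*} [AddCommGroup V] [Module ℂ V] [TopologicalSpace V]
    [IsTopologicalAddGroup V] [ContinuousSMul ℂ V] [T2Space V]
    [Module ℝ V] [IsScalarTower ℝ ℂ V] [LocallyConvexSpace ℝ V]
    (f : S → V)
    (hmeas : ∀ ℓ : V →L[ℂ] ℂ, Measurable fun σ => ℓ (f σ))
    (hint : ∀ ℓ : V →L[ℂ] ℂ, Integrable (fun σ => ℓ (f σ)) ρ)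
    (hwint : ∀ T : Set S, MeasurableSet T →
      ∃ v : V, ∀ ℓ : V →L[ℂ] ℂ, ℓ v = ∫ σ in T, ℓ (f σ) ∂ρ)
    (I : V) (hI : ∀ ℓ : V →L[ℂ] ℂ, ℓ I = ∫ σ, ℓ (f σ) ∂ρ)
    (α : Seminorm ℂ V) (hα : Continuous α) :
    ENNReal.ofReal (α I) ≤ lowerIntegral ρ (fun σ => ENNReal.ofReal (α (f σ))) :=
  seminorm_weakIntegral_le_lowerIntegral_general ρ f hmeas I hI α hα

end
end

section
/- Dominated convergence for weak integrals: let V be a sequentially complete Hausdorff locally convex space whose topology is generated by a family 𝒮 of seminorms. If (f_n) is a sequence of weakly integrable maps Σ → V converging pointwise to f : Σ → V, and for every α ∈ 𝒮 the upper integral of sup_n α(f_n) is finite, then f is weakly integrable and ∫_Σ f_n dρ → ∫_Σ f dρ in V. -/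
open MeasureTheory ENNReal Filter
open scoped ENNReal NNReal Topology

noncomputable section

/-- `f : S → V` is weakly (Gel'fand–Pettis) integrable: every `ℓ ∘ f` with
`ℓ` in the continuous dual is measurable and integrable, and over every measurable
set there is a vector representing the integrals of the `ℓ ∘ f`. -/
def WeaklyIntegrable {S : Type*} [MeasurableSpace S] (ρ : Measure S)
    {V : Type*} [AddCommGroup V] [Module ℂ V] [TopologicalSpace V] (f : S → V) : Prop :=
  (∀ ℓ : V →L[ℂ] ℂ, Measurable fun σ => ℓ (f σ)) ∧
  (∀ ℓ : V →L[ℂ] ℂ, Integrable (fun σ => ℓ (f σ)) ρ) ∧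
  ∀ T : Set S, MeasurableSet T →
    ∃ v : V, ∀ ℓ : V →L[ℂ] ℂ, ℓ v = ∫ σ in T, ℓ (f σ) ∂ρ

/-! Applying Hahn–Banach to a single seminorm `p i` gives a continuous functional `ℓ` with
`‖ℓ‖ ≤ p i` and `ℓ v = p i v`, so a weak integral satisfies
`p i (∫ h) ≤ ∫⁻ p i ∘ h` even though `p i ∘ h` need not be measurable. For `h = f m - f n` the
integrand is dominated by twice the majorant of `sup_n p i (f n)` and tends to zero pointwise,
so the integrals `I n` are Cauchy and converge by sequential completeness. Every continuous
functional is dominated by finitely many seminorms, so scalar dominated convergence identifies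
the limit as the weak integral of `g`; restricting the measure to `T` handles measurable sets. -/

theorem Seminorm.exists_dual_le_eq {𝕜 V : Type*} [RCLike 𝕜] [AddCommGroup V] [Module 𝕜 V]
    (q : Seminorm 𝕜 V) (v : V) : ∃ ℓ : Module.Dual 𝕜 V, (∀ x, ‖ℓ x‖ ≤ q x) ∧ ℓ v = q v := by
  have H : ∀ c : 𝕜, c • v = 0 → RingHom.id 𝕜 c • (q v : 𝕜) = 0 := fun c hc => by
    have : ‖c‖ * q v = 0 := by rw [← map_smul_eq_mul, hc, map_zero]
    rcases mul_eq_zero.1 this with h | h <;> simp_all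
  let f := LinearPMap.mkSpanSingleton' v (q v : 𝕜) H
  have hf : ∀ x, ‖f.toFun x‖ ≤ q x := by
    rintro ⟨x, hx⟩
    obtain ⟨c, rfl⟩ := Submodule.mem_span_singleton.1 hx
    change ‖f ⟨c • v, hx⟩‖ ≤ q (c • v)
    rw [LinearPMap.mkSpanSingleton'_apply, map_smul_eq_mul, RingHom.id_apply, norm_smul,
      RCLike.norm_ofReal, abs_of_nonneg (apply_nonneg q v)]
  obtain ⟨ℓ, hℓf, hℓq⟩ := Module.Dual.exists_extension_of_le_seminorm f.domain f.toFun hf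
  refine ⟨ℓ, hℓq, ?_⟩
  have hv : v ∈ f.domain := Submodule.mem_span_singleton_self v
  exact (hℓf ⟨v, hv⟩).trans (LinearPMap.mkSpanSingleton'_apply_self v _ H hv)

theorem exists_integrable_bound_of_upperIntegral_iSup_lt_top {Ω κ : Type*} [MeasurableSpace Ω]
    {μ : Measure Ω} {h : κ → Ω → ℝ}
    (hh : upperIntegral μ (fun ω => ⨆ k, ENNReal.ofReal (h k ω)) < ∞) :
    ∃ G : Ω → ℝ, Integrable G μ ∧ ∀ᵐ ω ∂μ, ∀ k, h k ω ≤ G ω := by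
  simp only [upperIntegral, iInf_lt_iff] at hh
  obtain ⟨G, hGm, hhG, hG⟩ := hh
  refine ⟨fun ω => (G ω).toReal, integrable_toReal_of_lintegral_ne_top hGm.aemeasurable hG.ne, ?_⟩
  filter_upwards [hhG, ae_lt_top hGm hG.ne] with ω hω hGω k
  exact (ENNReal.ofReal_le_iff_le_toReal hGω.ne).1
    ((le_iSup (fun k => ENNReal.ofReal (h k ω)) k).trans hω)

theorem tendsto_lintegral_zero_of_dominated {α κ : Type*} [MeasurableSpace α] {μ : Measure α}
    {l : Filter κ} [l.IsCountablyGenerated] {F : κ → α → ℝ≥0∞} (G : α → ℝ≥0∞)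
    (hG : ∫⁻ a, G a ∂μ ≠ ∞) (hFG : ∀ k, ∀ᵐ a ∂μ, F k a ≤ G a)
    (hF : ∀ᵐ a ∂μ, Tendsto (fun k => F k a) l (𝓝 0)) :
    Tendsto (fun k => ∫⁻ a, F k a ∂μ) l (𝓝 0) := by
  -- `∫⁻` of a function equals that of a measurable minorant, which inherits the domination.
  choose φ hφm hφF hφ using fun k => exists_measurable_le_lintegral_eq μ (F k)
  simp_rw [hφ]
  have hφ0 : ∀ᵐ a ∂μ, Tendsto (fun k => φ k a) l (𝓝 0) := hF.mono fun a ha =>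
    tendsto_of_tendsto_of_tendsto_of_le_of_le tendsto_const_nhds ha (fun _ => zero_le)
      fun k => hφF k a
  simpa using tendsto_lintegral_filter_of_dominated_convergence G (.of_forall hφm)
    (.of_forall fun k => (hFG k).mono fun a ha => (hφF k a).trans ha) hG hφ0

section

variable {𝕜 V ι S : Type*} [RCLike 𝕜] [AddCommGroup V] [Module 𝕜 V] [TopologicalSpace V]
  {p : SeminormFamily 𝕜 V ι} [MeasurableSpace S] {μ : Measure S}

theorem WithSeminorms.exists_continuous_dual_le_eq (hp : WithSeminorms p) (i : ι) (v : V) :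
    ∃ ℓ : V →L[𝕜] 𝕜, (∀ x, ‖ℓ x‖ ≤ p i x) ∧ ℓ v = p i v := by
  obtain ⟨ℓ, hℓp, hℓv⟩ := (p i).exists_dual_le_eq v
  have hℓ : Continuous ℓ :=
    hp.continuous_normedSpace_rng 𝕜 ℓ ⟨{i}, 1, fun x => by simpa using hℓp x⟩
  exact ⟨⟨ℓ, hℓ⟩, hℓp, hℓv⟩

theorem WithSeminorms.ofReal_le_lintegral_of_forall_eq_integral (hp : WithSeminorms p) (i : ι)
    {h : S → V} {v : V} (hv : ∀ ℓ : V →L[𝕜] 𝕜, ℓ v = ∫ σ, ℓ (h σ) ∂μ) :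
    ENNReal.ofReal (p i v) ≤ ∫⁻ σ, ENNReal.ofReal (p i (h σ)) ∂μ := by
  obtain ⟨ℓ, hℓp, hℓv⟩ := hp.exists_continuous_dual_le_eq i v
  calc ENNReal.ofReal (p i v) = ‖ℓ v‖ₑ := by
        rw [hℓv, ← ofReal_norm, RCLike.norm_ofReal, abs_of_nonneg (apply_nonneg _ _)]
    _ = ‖∫ σ, ℓ (h σ) ∂μ‖ₑ := by rw [hv]
    _ ≤ ∫⁻ σ, ‖ℓ (h σ)‖ₑ ∂μ := enorm_integral_le_lintegral_enorm _
    _ ≤ ∫⁻ σ, ENNReal.ofReal (p i (h σ)) ∂μ :=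
        lintegral_mono fun σ => by rw [← ofReal_norm]; exact ENNReal.ofReal_le_ofReal (hℓp _)

theorem WithSeminorms.exists_integrable_bound_norm_comp {κ : Type*} (hp : WithSeminorms p)
    {F : κ → S → V} (hdom : ∀ i, ∃ G : S → ℝ, Integrable G μ ∧ ∀ᵐ σ ∂μ, ∀ k, p i (F k σ) ≤ G σ)
    (ℓ : V →L[𝕜] 𝕜) : ∃ B : S → ℝ, Integrable B μ ∧ ∀ᵐ σ ∂μ, ∀ k, ‖ℓ (F k σ)‖ ≤ B σ := by
  obtain ⟨s, C, -, hC⟩ := Seminorm.bound_of_continuous hp ((normSeminorm 𝕜 𝕜).comp ℓ.toLinearMap)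
    (continuous_norm.comp ℓ.continuous)
  choose G hGi hG using hdom
  refine ⟨fun σ => C * ∑ i ∈ s, G i σ, (integrable_finsetSum s fun i _ => hGi i).const_mul _, ?_⟩
  filter_upwards [eventually_all_finset s |>.2 fun i _ => hG i] with σ hσ k
  calc ‖ℓ (F k σ)‖ ≤ C * s.sup p (F k σ) := hC (F k σ)
    _ ≤ C * ∑ i ∈ s, p i (F k σ) := by
        gcongr
        simpa using Seminorm.finset_sup_le_sum p s (F k σ)
    _ ≤ C * ∑ i ∈ s, G i σ := by gcongr with i hi; exact hσ i hi k

variable {f : ℕ → S → V} {g : S → V}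

theorem WithSeminorms.tendsto_integral_comp_of_dominated (hp : WithSeminorms p)
    (hdom : ∀ i, ∃ G : S → ℝ, Integrable G μ ∧ ∀ᵐ σ ∂μ, ∀ n, p i (f n σ) ≤ G σ)
    (hconv : ∀ σ, Tendsto (fun n => f n σ) atTop (𝓝 (g σ)))
    (ℓ : V →L[𝕜] 𝕜) (hℓ : ∀ n, Measurable fun σ => ℓ (f n σ)) :
    Measurable (fun σ => ℓ (g σ)) ∧ Integrable (fun σ => ℓ (g σ)) μ ∧
      Tendsto (fun n => ∫ σ, ℓ (f n σ) ∂μ) atTop (𝓝 (∫ σ, ℓ (g σ) ∂μ)) := by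
  have hℓconv : ∀ σ, Tendsto (fun n => ℓ (f n σ)) atTop (𝓝 (ℓ (g σ))) :=
    fun σ => (ℓ.continuous.tendsto _).comp (hconv σ)
  have hℓg : Measurable fun σ => ℓ (g σ) :=
    measurable_of_tendsto_metrizable hℓ (tendsto_pi_nhds.2 hℓconv)
  obtain ⟨B, hB, hfB⟩ := hp.exists_integrable_bound_norm_comp hdom ℓ
  have hgB : ∀ᵐ σ ∂μ, ‖ℓ (g σ)‖ ≤ B σ := hfB.mono fun σ hσ =>
    le_of_tendsto (hℓconv σ).norm (.of_forall hσ)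
  exact ⟨hℓg, hB.mono' hℓg.aestronglyMeasurable hgB,
    tendsto_integral_of_dominated_convergence B (fun n => (hℓ n).aestronglyMeasurable) hB
      (fun n => hfB.mono fun σ hσ => hσ n) (.of_forall hℓconv)⟩

theorem WithSeminorms.tendsto_seminorm_sub_of_forall_eq_integral [IsTopologicalAddGroup V]
    (hp : WithSeminorms p) (i : ι) {G : S → ℝ} (hG : Integrable G μ)
    (hfG : ∀ᵐ σ ∂μ, ∀ n, p i (f n σ) ≤ G σ)
    (hint : ∀ n (ℓ : V →L[𝕜] 𝕜), Integrable (fun σ => ℓ (f n σ)) μ)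
    (hconv : ∀ σ, Tendsto (fun n => f n σ) atTop (𝓝 (g σ)))
    {I : ℕ → V} (hI : ∀ n (ℓ : V →L[𝕜] 𝕜), ℓ (I n) = ∫ σ, ℓ (f n σ) ∂μ) :
    Tendsto (fun mn : ℕ × ℕ => p i (I mn.1 - I mn.2)) atTop (𝓝 0) := by
  have hIsub : ∀ (mn : ℕ × ℕ) (ℓ : V →L[𝕜] 𝕜),
      ℓ (I mn.1 - I mn.2) = ∫ σ, ℓ (f mn.1 σ - f mn.2 σ) ∂μ := fun mn ℓ => by
    simp only [map_sub, hI]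
    exact (integral_sub (hint _ ℓ) (hint _ ℓ)).symm
  have hlint : Tendsto (fun mn : ℕ × ℕ => ∫⁻ σ, ENNReal.ofReal (p i (f mn.1 σ - f mn.2 σ)) ∂μ)
      atTop (𝓝 0) := by
    refine tendsto_lintegral_zero_of_dominated (fun σ => ENNReal.ofReal (2 * G σ))
      (hG.const_mul 2).lintegral_lt_top.ne (fun mn => ?_) (.of_forall fun σ => ?_)
    · filter_upwards [hfG] with σ hσ
      exact ENNReal.ofReal_le_ofReal <|
        (map_sub_le_add _ _ _).trans (by linarith [hσ mn.1, hσ mn.2])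
    · have hsub : Tendsto (fun mn : ℕ × ℕ => f mn.1 σ - f mn.2 σ) atTop (𝓝 0) := by
        rw [← prod_atTop_atTop_eq]
        simpa using ((hconv σ).comp tendsto_fst).sub ((hconv σ).comp tendsto_snd)
      simpa using ENNReal.tendsto_ofReal (((hp.continuous_seminorm i).tendsto 0).comp hsub)
  have hofReal : Tendsto (fun mn : ℕ × ℕ => ENNReal.ofReal (p i (I mn.1 - I mn.2))) atTop (𝓝 0) :=
    tendsto_of_tendsto_of_tendsto_of_le_of_le tendsto_const_nhds hlint (fun _ => zero_le)
      fun mn => hp.ofReal_le_lintegral_of_forall_eq_integral i (hIsub mn)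
  simpa [Function.comp_def, ENNReal.toReal_ofReal (apply_nonneg _ _)] using
    (ENNReal.tendsto_toReal ENNReal.zero_ne_top).comp hofReal

theorem WithSeminorms.exists_tendsto_of_forall_eq_integral [IsTopologicalAddGroup V]
    (hp : WithSeminorms p)
    (hcomplete : ∀ u : ℕ → V,
      (∀ i : ι, ∀ ε : ℝ, 0 < ε → ∃ N : ℕ, ∀ m ≥ N, ∀ n ≥ N, p i (u m - u n) < ε) →
      ∃ v : V, Tendsto u atTop (𝓝 v))
    (hmeas : ∀ n (ℓ : V →L[𝕜] 𝕜), Measurable fun σ => ℓ (f n σ))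
    (hint : ∀ n (ℓ : V →L[𝕜] 𝕜), Integrable (fun σ => ℓ (f n σ)) μ)
    (hconv : ∀ σ, Tendsto (fun n => f n σ) atTop (𝓝 (g σ)))
    (hdom : ∀ i, ∃ G : S → ℝ, Integrable G μ ∧ ∀ᵐ σ ∂μ, ∀ n, p i (f n σ) ≤ G σ)
    {I : ℕ → V} (hI : ∀ n (ℓ : V →L[𝕜] 𝕜), ℓ (I n) = ∫ σ, ℓ (f n σ) ∂μ) :
    ∃ J : V, (∀ ℓ : V →L[𝕜] 𝕜, ℓ J = ∫ σ, ℓ (g σ) ∂μ) ∧ Tendsto I atTop (𝓝 J) := by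
  obtain ⟨J, hIJ⟩ := hcomplete I fun i ε hε => by
    obtain ⟨G, hG, hfG⟩ := hdom i
    have hcauchy := hp.tendsto_seminorm_sub_of_forall_eq_integral i hG hfG hint hconv hI
    exact eventually_atTop_prod_self'.1 <| (tendsto_order.1 hcauchy).2 ε hε
  refine ⟨J, fun ℓ => tendsto_nhds_unique ((ℓ.continuous.tendsto J).comp hIJ) ?_, hIJ⟩
  simpa only [Function.comp_def, hI] using
    (hp.tendsto_integral_comp_of_dominated hdom hconv ℓ (hmeas · ℓ)).2.2

end

theorem weakIntegral_dominated_convergence_general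
    {S : Type*} [MeasurableSpace S] (ρ : Measure S)
    {V : Type*} [AddCommGroup V] [Module ℂ V] [TopologicalSpace V]
    [IsTopologicalAddGroup V]
    {ι : Type*} (p : SeminormFamily ℂ V ι) (hp : WithSeminorms p)
    (hcomplete : ∀ u : ℕ → V,
      (∀ i : ι, ∀ ε : ℝ, 0 < ε → ∃ N : ℕ, ∀ m ≥ N, ∀ n ≥ N, p i (u m - u n) < ε) →
      ∃ v : V, Tendsto u atTop (𝓝 v))
    (f : ℕ → S → V) (g : S → V)
    (hfint : ∀ n, WeaklyIntegrable ρ (f n))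
    (hconv : ∀ σ, Tendsto (fun n => f n σ) atTop (𝓝 (g σ)))
    (hdom : ∀ i : ι,
      upperIntegral ρ (fun σ => ⨆ n, ENNReal.ofReal (p i (f n σ))) < ∞)
    (I : ℕ → V) (hI : ∀ n, ∀ ℓ : V →L[ℂ] ℂ, ℓ (I n) = ∫ σ, ℓ (f n σ) ∂ρ) :
    WeaklyIntegrable ρ g ∧
      ∃ J : V, (∀ ℓ : V →L[ℂ] ℂ, ℓ J = ∫ σ, ℓ (g σ) ∂ρ) ∧
        Tendsto I atTop (𝓝 J) := by
  have hmeas := fun n => (hfint n).1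
  have hint := fun n => (hfint n).2.1
  have hbound := fun i => exists_integrable_bound_of_upperIntegral_iSup_lt_top (hdom i)
  have hlim := fun ℓ => hp.tendsto_integral_comp_of_dominated hbound hconv ℓ (hmeas · ℓ)
  refine ⟨⟨fun ℓ => (hlim ℓ).1, fun ℓ => (hlim ℓ).2.1, fun T hT => ?_⟩,
    hp.exists_tendsto_of_forall_eq_integral hcomplete hmeas hint hconv hbound hI⟩
  choose IT hIT using fun n => (hfint n).2.2 T hT
  obtain ⟨JT, hJT, -⟩ := hp.exists_tendsto_of_forall_eq_integral (μ := ρ.restrict T) hcomplete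
    hmeas (fun n ℓ => (hint n ℓ).restrict) hconv
    (fun i => (hbound i).imp fun _ hG => ⟨hG.1.restrict, ae_restrict_of_ae hG.2⟩) hIT
  exact ⟨JT, hJT⟩

/-- dominated convergence for weak (Gel'fand–Pettis) integrals in a
sequentially complete Hausdorff locally convex space whose topology is generated by
a family `p` of seminorms. If the weakly integrable `f_n` converge pointwise to `f`
and for each seminorm the upper integral of `sup_n α(f_n)` is finite, then `f` is
weakly integrable and the weak integrals of `f_n` converge to that of `f`. -/
theorem weakIntegral_dominated_convergence
    {S : Type*} [MeasurableSpace S] (ρ : Measure S)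
    {V : Type*} [AddCommGroup V] [Module ℂ V] [TopologicalSpace V]
    [IsTopologicalAddGroup V] [ContinuousSMul ℂ V] [T2Space V]
    {ι : Type*} [Nonempty ι] (p : SeminormFamily ℂ V ι) (hp : WithSeminorms p)
    (hcomplete : ∀ u : ℕ → V,
      (∀ i : ι, ∀ ε : ℝ, 0 < ε → ∃ N : ℕ, ∀ m ≥ N, ∀ n ≥ N, p i (u m - u n) < ε) →
      ∃ v : V, Tendsto u atTop (𝓝 v))
    (f : ℕ → S → V) (g : S → V)
    (hfint : ∀ n, WeaklyIntegrable ρ (f n))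
    (hconv : ∀ σ, Tendsto (fun n => f n σ) atTop (𝓝 (g σ)))
    (hdom : ∀ i : ι,
      upperIntegral ρ (fun σ => ⨆ n, ENNReal.ofReal (p i (f n σ))) < ∞)
    (I : ℕ → V) (hI : ∀ n, ∀ ℓ : V →L[ℂ] ℂ, ℓ (I n) = ∫ σ, ℓ (f n σ) ∂ρ) :
    WeaklyIntegrable ρ g ∧
      ∃ J : V, (∀ ℓ : V →L[ℂ] ℂ, ℓ J = ∫ σ, ℓ (g σ) ∂ρ) ∧
        Tendsto I atTop (𝓝 J) :=
  weakIntegral_dominated_convergence_general ρ p hp hcomplete f g hfint hconv hdom I hI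

end
end

section
/- If V is a reflexive Banach space, f : Σ → V is weakly measurable (ℓ∘f measurable for all ℓ ∈ V*), and ∫_Σ |ℓ∘f| dρ < ∞ for all ℓ ∈ V*, then f is Gel'fand–Pettis integrable: for every measurable set S there exists v_S ∈ V with ℓ(v_S) = ∫_S ℓ∘f dρ for all ℓ ∈ V*. -/
open MeasureTheory Filter Topology

noncomputable section

/-! By the closed graph theorem, `ℓ ↦ ℓ ∘ f` is a bounded operator from the dual into `L¹`: its
graph is closed because an `L¹`-convergent sequence has an a.e. convergent subsequence. Composed
with the integral it gives a functional on the dual, i.e. an element of the bidual, and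
reflexivity pulls it back to a vector of `V`. -/

namespace MeasureTheory

theorem TendstoInMeasure.ae_eq_of_ae_tendsto {α ι E : Type*} {m : MeasurableSpace α}
    {μ : Measure α} [MetricSpace E] {l : Filter ι} [l.NeBot] [l.IsCountablyGenerated]
    {f : ι → α → E} {g h : α → E} (hfg : TendstoInMeasure μ f l g)
    (hfh : ∀ᵐ x ∂μ, Tendsto (fun i => f i x) l (𝓝 (h x))) : g =ᵐ[μ] h := by
  obtain ⟨ns, hns, hg⟩ := hfg.exists_seq_tendsto_ae'
  filter_upwards [hg, hfh] with x hgx hhx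
  exact tendsto_nhds_unique hgx (hhx.comp hns)

section Dunford

variable {𝕜 E S : Type*} [RCLike 𝕜] [NormedAddCommGroup E] [NormedSpace 𝕜 E]
  [MeasurableSpace S] {μ : Measure S} {f : S → E}

def dualToL1Linear (hf : ∀ ℓ : StrongDual 𝕜 E, Integrable (fun σ => ℓ (f σ)) μ) :
    StrongDual 𝕜 E →ₗ[𝕜] Lp 𝕜 1 μ where
  toFun ℓ := (hf ℓ).toL1 _
  map_add' ℓ ℓ' := Integrable.toL1_add _ _ (hf ℓ) (hf ℓ')
  map_smul' c ℓ := Integrable.toL1_smul _ (hf ℓ) c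

theorem dualToL1Linear_seqClosedGraph
    (hf : ∀ ℓ : StrongDual 𝕜 E, Integrable (fun σ => ℓ (f σ)) μ)
    (u : ℕ → StrongDual 𝕜 E) (ℓ : StrongDual 𝕜 E) (g : Lp 𝕜 1 μ)
    (hu : Tendsto u atTop (𝓝 ℓ)) (hug : Tendsto (dualToL1Linear hf ∘ u) atTop (𝓝 g)) :
    g = dualToL1Linear hf ℓ := by
  have hpointwise : ∀ᵐ σ ∂μ, Tendsto (fun n => (dualToL1Linear hf (u n) : S → 𝕜) σ) atTop
      (𝓝 (ℓ (f σ))) := by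
    filter_upwards [ae_all_iff.mpr fun n => (hf (u n)).coeFn_toL1] with σ hσ
    simp only [dualToL1Linear, LinearMap.coe_mk, AddHom.coe_mk, hσ]
    exact ((ContinuousLinearMap.apply 𝕜 𝕜 (f σ)).continuous.tendsto ℓ).comp hu
  have hae := (tendstoInMeasure_of_tendsto_Lp hug).ae_eq_of_ae_tendsto hpointwise
  exact Lp.ext (hae.trans (hf ℓ).coeFn_toL1.symm)

def dualToL1 (hf : ∀ ℓ : StrongDual 𝕜 E, Integrable (fun σ => ℓ (f σ)) μ) :
    StrongDual 𝕜 E →L[𝕜] Lp 𝕜 1 μ :=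
  .ofSeqClosedGraph (dualToL1Linear_seqClosedGraph hf)

theorem dualToL1_ae_eq (hf : ∀ ℓ : StrongDual 𝕜 E, Integrable (fun σ => ℓ (f σ)) μ)
    (ℓ : StrongDual 𝕜 E) : dualToL1 hf ℓ =ᵐ[μ] fun σ => ℓ (f σ) :=
  (hf ℓ).coeFn_toL1

def dunfordIntegral (hf : ∀ ℓ : StrongDual 𝕜 E, Integrable (fun σ => ℓ (f σ)) μ) :
    StrongDual 𝕜 (StrongDual 𝕜 E) :=
  L1.integralCLM' 𝕜 ∘L dualToL1 hf

theorem dunfordIntegral_apply (hf : ∀ ℓ : StrongDual 𝕜 E, Integrable (fun σ => ℓ (f σ)) μ)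
    (ℓ : StrongDual 𝕜 E) : dunfordIntegral hf ℓ = ∫ σ, ℓ (f σ) ∂μ := by
  rw [dunfordIntegral, ContinuousLinearMap.comp_apply, ← L1.integral_eq',
    L1.integral_eq_integral, integral_congr_ae (dualToL1_ae_eq hf ℓ)]

theorem exists_apply_eq_integral_of_surjective_inclusionInDoubleDual
    (hrefl : Function.Surjective (NormedSpace.inclusionInDoubleDual 𝕜 E))
    (hf : ∀ ℓ : StrongDual 𝕜 E, Integrable (fun σ => ℓ (f σ)) μ) :
    ∃ v : E, ∀ ℓ : StrongDual 𝕜 E, ℓ v = ∫ σ, ℓ (f σ) ∂μ := by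
  obtain ⟨v, hv⟩ := hrefl (dunfordIntegral hf)
  exact ⟨v, fun ℓ => by rw [← dunfordIntegral_apply hf, ← hv, NormedSpace.dual_def]⟩

end Dunford

end MeasureTheory

theorem weakIntegral_exists_of_reflexive_general
    {S : Type*} [MeasurableSpace S] (ρ : Measure S)
    {V : Type*} [NormedAddCommGroup V] [NormedSpace ℂ V]
    (hrefl : Function.Surjective (NormedSpace.inclusionInDoubleDual ℂ V))
    (f : S → V)
    (hint : ∀ ℓ : StrongDual ℂ V, Integrable (fun σ => ℓ (f σ)) ρ) :
    ∀ T : Set S, MeasurableSet T →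
      ∃ v : V, ∀ ℓ : StrongDual ℂ V, ℓ v = ∫ σ in T, ℓ (f σ) ∂ρ :=
  fun _ _ => exists_apply_eq_integral_of_surjective_inclusionInDoubleDual hrefl
    fun ℓ => (hint ℓ).restrict

/-- if `V` is a reflexive Banach space (the canonical embedding into the
double dual is surjective), `f : S → V` is weakly measurable, and `ℓ ∘ f` is
integrable for every continuous linear functional `ℓ`, then `f` is Gel'fand–Pettis
integrable: over every measurable set `T` there is `v_T ∈ V` with
`ℓ(v_T) = ∫_T ℓ(f σ) dρ` for all `ℓ`. -/
theorem weakIntegral_exists_of_reflexive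
    {S : Type*} [MeasurableSpace S] (ρ : Measure S)
    {V : Type*} [NormedAddCommGroup V] [NormedSpace ℂ V] [CompleteSpace V]
    (hrefl : Function.Surjective (NormedSpace.inclusionInDoubleDual ℂ V))
    (f : S → V)
    (hmeas : ∀ ℓ : StrongDual ℂ V, Measurable fun σ => ℓ (f σ))
    (hint : ∀ ℓ : StrongDual ℂ V, Integrable (fun σ => ℓ (f σ)) ρ) :
    ∀ T : Set S, MeasurableSet T →
      ∃ v : V, ∀ ℓ : StrongDual ℂ V, ℓ v = ∫ σ in T, ℓ (f σ) ∂ρ :=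
  weakIntegral_exists_of_reflexive_general ρ hrefl f hint

end
end
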